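/- arXiv:2010.06768 — 3 statements merged into one kernel-verified Lean document; each statement's English description precedes it below -/
import Mathlib

section
/- Suppose a likelihood density satisfies f(y|x) = h*(y)·exp(⟨[T*_Y(y), α], T_prior(x)⟩) for all x, and suppose S₁,…,S_K are pairwise disjoint sets with functions Tᵢ such that T_prior(x) = Mᵢ·Tᵢ(x) + vᵢ for all x ∈ Sᵢ (Mᵢ a matrix, vᵢ a vector). Then for any x ∈ ⋃ᵢ Sᵢ, f(y|x) = h*(y)·exp(∑ᵢ ⟨Mᵢᵀ[T*_Y(y), α], 𝟙{x∈Sᵢ}Tᵢ(x)⟩ + ∑_{i<K}(vᵢ - v_K)ᵀ[T*_Y(y), α]·𝟙{x∈Sᵢ} + v_Kᵀ[T*_Y(y), α]). In particular, the posterior density proportional to f(y|x)·f_mix(x), where f_mix is a non-overlapping mixture exponential family density with sufficient statistics (𝟙{x∈Sᵢ}Tᵢ(x), 𝟙{x∈Sᵢ})ᵢ, lies in the same exponential family as f_mix with updated natural parameters. -/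
open Set
open scoped RealInnerProductSpace

/-- (Conjugacy of non-overlapping mixtures.) If the likelihood has
Diaconis–Ylvisaker form `f(y|x) = h*(y)·exp⟪[T*_Y(y),α], T_prior(x)⟫` (here the stacked
vector `[T*_Y(y), α]` is denoted `θ y`), and on each of the pairwise disjoint sets `Sᵢ`
the prior sufficient statistic is an affine image `T_prior(x) = Mᵢ(Tᵢ x) + vᵢ`, then the
likelihood can be rewritten in terms of the mixture sufficient statistics
`(𝟙{x∈Sᵢ}Tᵢ(x), 𝟙{x∈Sᵢ})`, and consequently the (unnormalized) posterior
`f(y|x)·f_mix(x)` lies in the same exponential family as `f_mix`, with updated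
natural parameters. -/
theorem conjugacy_of_non_overlapping_mixture
    {X Y E E' : Type*}
    [NormedAddCommGroup E] [InnerProductSpace ℝ E] [FiniteDimensional ℝ E]
    [NormedAddCommGroup E'] [InnerProductSpace ℝ E'] [FiniteDimensional ℝ E']
    {K : ℕ}
    (S : Fin (K + 1) → Set X) (hdisj : Pairwise (Function.onFun Disjoint S))
    (T : Fin (K + 1) → X → E') (M : Fin (K + 1) → (E' →ₗ[ℝ] E)) (v : Fin (K + 1) → E)
    (Tprior : X → E) (θ : Y → E) (hstar : Y → ℝ) (f : Y → X → ℝ)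
    (hf : ∀ y x, f y x = hstar y * Real.exp ⟪θ y, Tprior x⟫)
    (hT : ∀ i, ∀ x ∈ S i, Tprior x = M i (T i x) + v i)
    (fmix : X → ℝ) (η : Fin (K + 1) → E') (c : Fin (K + 1) → ℝ)
    (hmix : ∀ x ∈ ⋃ i, S i, fmix x =
      Real.exp ((∑ i, ⟪η i, (S i).indicator (T i) x⟫) +
        ∑ i : Fin K, c i.castSucc * (S i.castSucc).indicator (fun _ => (1 : ℝ)) x)) :
    (∀ y, ∀ x ∈ ⋃ i, S i,
      f y x = hstar y * Real.exp
        ((∑ i, ⟪(LinearMap.adjoint (M i)) (θ y), (S i).indicator (T i) x⟫) +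
          (∑ i : Fin K, ⟪θ y, v i.castSucc - v (Fin.last K)⟫ *
            (S i.castSucc).indicator (fun _ => (1 : ℝ)) x) +
          ⟪θ y, v (Fin.last K)⟫)) ∧
    (∀ y, ∃ (η' : Fin (K + 1) → E') (c' : Fin (K + 1) → ℝ) (C : ℝ),
      ∀ x ∈ ⋃ i, S i,
        f y x * fmix x = C * Real.exp ((∑ i, ⟪η' i, (S i).indicator (T i) x⟫) +
          ∑ i : Fin K, c' i.castSucc * (S i.castSucc).indicator (fun _ => (1 : ℝ)) x)) := by

  have key : ∀ x, ∀ j, x ∈ S j → ∀ (w : Fin (K+1) → E'),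
      (∑ i, ⟪w i, (S i).indicator (T i) x⟫) = ⟪w j, T j x⟫ := by
    intro x j hj w
    rw [Finset.sum_eq_single j]
    · rw [Set.indicator_of_mem hj]
    · intro i _ hij
      rw [Set.indicator_of_notMem, inner_zero_right]
      exact fun hx => (hdisj hij).le_bot ⟨hx, hj⟩
    · simp
  have key1 : ∀ x, ∀ j, x ∈ S j → ∀ (a : Fin (K+1) → ℝ),
      (∑ i : Fin K, a i.castSucc * (S i.castSucc).indicator (fun _ => (1:ℝ)) x)
        = if j = Fin.last K then 0 else a j := by
    intro x j hj a
    by_cases hjl : j = Fin.last K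
    · simp only [hjl, if_true]
      apply Finset.sum_eq_zero
      intro i _
      rw [Set.indicator_of_notMem, mul_zero]
      intro hx
      exact (hdisj (Fin.castSucc_lt_last i).ne).le_bot ⟨hx, hjl ▸ hj⟩
    · obtain ⟨j', rfl⟩ : ∃ j' : Fin K, j'.castSucc = j :=
        ⟨⟨j, Fin.val_lt_last hjl⟩, by ext; simp⟩
      rw [if_neg hjl, Finset.sum_eq_single j']
      · rw [Set.indicator_of_mem hj, mul_one]
      · intro i _ hij
        rw [Set.indicator_of_notMem, mul_zero]
        intro hx
        refine (hdisj (fun h => hij (Fin.castSucc_injective _ h))).le_bot ⟨hx, hj⟩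
      · simp
  have part1 : ∀ y, ∀ x ∈ ⋃ i, S i,
      f y x = hstar y * Real.exp
        ((∑ i, ⟪(LinearMap.adjoint (M i)) (θ y), (S i).indicator (T i) x⟫) +
          (∑ i : Fin K, ⟪θ y, v i.castSucc - v (Fin.last K)⟫ *
            (S i.castSucc).indicator (fun _ => (1 : ℝ)) x) +
          ⟪θ y, v (Fin.last K)⟫) := by
    intro y x hx
    obtain ⟨j, hj⟩ := Set.mem_iUnion.mp hx
    rw [hf, hT j x hj, key x j hj, key1 x j hj (fun i => ⟪θ y, v i - v (Fin.last K)⟫), LinearMap.adjoint_inner_left]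
    congr 1
    rw [inner_add_right]
    by_cases hjl : j = Fin.last K
    · rw [if_pos hjl, hjl, add_zero]
    · rw [if_neg hjl, inner_sub_right]
      ring
  refine ⟨part1, ?_⟩
  intro y
  refine ⟨fun i => LinearMap.adjoint (M i) (θ y) + η i,
    fun i => ⟪θ y, v i - v (Fin.last K)⟫ + c i,
    hstar y * Real.exp ⟪θ y, v (Fin.last K)⟫, ?_⟩
  intro x hx
  rw [part1 y x hx, hmix x hx]
  simp only [inner_add_left, add_mul, Finset.sum_add_distrib]
  rw [mul_assoc, mul_assoc, ← Real.exp_add, ← Real.exp_add]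
  congr 2
  ring
end

section
/- In the setting of the one-dimensional naive mean-field ELBo, for any fixed ψ₀ strictly between 0 and 1, with μ and s² set to their stationary values μ(ψ₀,σ₀²) and s²(ψ₀,σ₀²), the ELBo satisfies ELBo = (1/2)(1 − ψ₀)·log σ₀² + O(1) as σ₀² ↓ 0; in particular ELBo(ψ₀) → −∞ as σ₀² ↓ 0, while ELBo(ψ₀ = 0) and ELBo(ψ₀ = 1) remain bounded. Hence for σ₀² small enough, the maximizer ψ₀* of the ELBo lies within any prescribed δ-neighborhood of {0, 1}. -/
/-!
Write `P = 1 / ve + ψ / v0 + (1 - ψ) / v1` for the stationary precision `1 / s²`. At the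
stationary point the ELBo equals `((1 - ψ) / 2) log v0` plus the remainder
`bh² / (2 ve² P) - 1/2 - (1/2) log (v0 P)` + (terms in `ψ` alone). As `v0 ↓ 0` we have `P → ∞` and
`v0 P → ψ`, so for `ψ > 0` the remainder converges; for `ψ ∈ [δ, 1 - δ]` it is even bounded
above uniformly in `v0`, because `P ≥ 1 / ve` and `v0 P ≥ ψ ≥ δ`. At `ψ = 0` the ELBo does not
depend on `v0` at all, so once `(δ / 2) log v0` is small enough the value at `ψ = 0` beats every
`ψ ∈ [δ, 1 - δ]`.
-/

open Real Filter Asymptotics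

/-- The one-dimensional naive mean-field ELBo (up to an additive constant). -/
noncomputable def elbo (ve v1 p0 bh v0 ψ m t : ℝ) : ℝ :=
  -(1 / (2 * ve)) * (m ^ 2 + t - 2 * bh * m) + (1 / 2) * Real.log t
    - ψ * Real.log ψ - (1 - ψ) * Real.log (1 - ψ)
    - (ψ / 2) * Real.log v0 - ((1 - ψ) / 2) * Real.log v1
    - (ψ / (2 * v0) + (1 - ψ) / (2 * v1)) * (m ^ 2 + t)
    + ψ * Real.log p0 + (1 - ψ) * Real.log (1 - p0)

/-- Stationary variational mean `μ(ψ₀, σ₀²)`. -/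
noncomputable def mustat (ve v1 bh v0 ψ : ℝ) : ℝ :=
  bh / (1 + ψ * ve / v0 + (1 - ψ) * ve / v1)

/-- Stationary variational variance `s²(ψ₀, σ₀²)`. -/
noncomputable def sstat (ve v1 v0 ψ : ℝ) : ℝ :=
  1 / (1 / ve + ψ / v0 + (1 - ψ) / v1)

/-- The ELBo with `μ` and `s²` at their stationary values, as a function of `(ψ₀, σ₀²)`. -/
noncomputable def Fstat (ve v1 p0 bh v0 ψ : ℝ) : ℝ :=
  elbo ve v1 p0 bh v0 ψ (mustat ve v1 bh v0 ψ) (sstat ve v1 v0 ψ)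

open scoped Topology

noncomputable def precision (ve v1 v0 ψ : ℝ) : ℝ := 1 / ve + ψ / v0 + (1 - ψ) / v1

noncomputable def mixtureTerm (v1 p0 ψ : ℝ) : ℝ :=
  binEntropy ψ + ψ * log p0 + (1 - ψ) * log (1 - p0) - (1 - ψ) / 2 * log v1

noncomputable def fstatRemainder (ve v1 p0 bh v0 ψ : ℝ) : ℝ :=
  bh ^ 2 / (2 * ve ^ 2 * precision ve v1 v0 ψ) - 1 / 2
    - log (v0 / ve + ψ + (1 - ψ) * v0 / v1) / 2 + mixtureTerm v1 p0 ψ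

section
variable {ve v1 v0 ψ : ℝ}

lemma inv_le_precision (hv1 : 0 < v1) (hv0 : 0 < v0) (hψ0 : 0 ≤ ψ) (hψ1 : ψ ≤ 1) :
    1 / ve ≤ precision ve v1 v0 ψ := by
  unfold precision
  have : 0 ≤ ψ / v0 := by positivity
  have : 0 ≤ (1 - ψ) / v1 := div_nonneg (sub_nonneg.2 hψ1) hv1.le
  linarith

lemma precision_pos (hve : 0 < ve) (hv1 : 0 < v1) (hv0 : 0 < v0) (hψ0 : 0 ≤ ψ) (hψ1 : ψ ≤ 1) :
    0 < precision ve v1 v0 ψ :=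
  (one_div_pos.2 hve).trans_le (inv_le_precision hv1 hv0 hψ0 hψ1)

lemma mul_precision (hv0 : v0 ≠ 0) :
    v0 * precision ve v1 v0 ψ = v0 / ve + ψ + (1 - ψ) * v0 / v1 := by
  unfold precision; field_simp

lemma tendsto_precision_atTop (hψ : 0 < ψ) :
    Tendsto (fun v0 => precision ve v1 v0 ψ) (𝓝[>] 0) atTop := by
  have : Tendsto (fun v0 : ℝ => ψ / v0) (𝓝[>] 0) atTop := by
    simpa only [div_eq_mul_inv] using tendsto_inv_nhdsGT_zero.const_mul_atTop hψ
  exact tendsto_atTop_add_const_right _ _ (tendsto_atTop_add_const_left _ _ this)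

lemma mustat_eq (hve : ve ≠ 0) (hv0 : v0 ≠ 0) (hv1 : v1 ≠ 0) (bh : ℝ) :
    mustat ve v1 bh v0 ψ = bh / (ve * precision ve v1 v0 ψ) := by
  unfold mustat precision; congr 1; field_simp

end

lemma Fstat_eq_log_add_remainder {ve v1 v0 ψ : ℝ} (p0 bh : ℝ) (hve : 0 < ve) (hv1 : 0 < v1)
    (hv0 : 0 < v0) (hψ0 : 0 ≤ ψ) (hψ1 : ψ ≤ 1) :
    Fstat ve v1 p0 bh v0 ψ = (1 - ψ) / 2 * log v0 + fstatRemainder ve v1 p0 bh v0 ψ := by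
  have hP := precision_pos hve hv1 hv0 hψ0 hψ1
  have hlog : log (v0 / ve + ψ + (1 - ψ) * v0 / v1) = log v0 + log (precision ve v1 v0 ψ) := by
    rw [← mul_precision hv0.ne', log_mul hv0.ne' hP.ne']
  have hprior : ψ / (2 * v0) + (1 - ψ) / (2 * v1) = (precision ve v1 v0 ψ - 1 / ve) / 2 := by
    unfold precision; ring
  rw [Fstat, fstatRemainder, mixtureTerm, hlog, mustat_eq hve.ne' hv0.ne' hv1.ne', sstat,
    one_div (1 / ve + _ + _), ← precision, elbo, hprior, log_inv, binEntropy, log_inv, log_inv]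
  generalize precision ve v1 v0 ψ = P at hP ⊢
  field_simp
  ring

section
variable {ve v1 ψ : ℝ} (p0 bh : ℝ)

lemma tendsto_fstatRemainder (hve : 0 < ve) (hψ : 0 < ψ) :
    Tendsto (fun v0 => fstatRemainder ve v1 p0 bh v0 ψ) (𝓝[>] 0)
      (𝓝 (-1 / 2 - log ψ / 2 + mixtureTerm v1 p0 ψ)) := by
  have hquad : Tendsto (fun v0 => bh ^ 2 / (2 * ve ^ 2 * precision ve v1 v0 ψ)) (𝓝[>] 0) (𝓝 0) :=
    tendsto_const_nhds.div_atTop ((tendsto_precision_atTop hψ).const_mul_atTop (by positivity))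
  have hlog : Tendsto (fun v0 => log (v0 / ve + ψ + (1 - ψ) * v0 / v1)) (𝓝[>] 0) (𝓝 (log ψ)) := by
    have hcont : Continuous fun v0 : ℝ => v0 / ve + ψ + (1 - ψ) * v0 / v1 := by fun_prop
    have hψlim : Tendsto (fun v0 : ℝ => v0 / ve + ψ + (1 - ψ) * v0 / v1) (𝓝 0) (𝓝 ψ) := by
      simpa using hcont.tendsto 0
    exact ((continuousAt_log hψ.ne').tendsto.comp hψlim).mono_left nhdsWithin_le_nhds
  have hlim := ((hquad.sub_const (1 / 2)).sub (hlog.div_const 2)).add_const (mixtureTerm v1 p0 ψ)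
  rwa [zero_sub, ← neg_div] at hlim

lemma fstatRemainder_le (hve : 0 < ve) (hv1 : 0 < v1) {v0 : ℝ} (hv0 : 0 < v0) (hψ0 : 0 < ψ)
    (hψ1 : ψ ≤ 1) :
    fstatRemainder ve v1 p0 bh v0 ψ ≤
      bh ^ 2 / (2 * ve) - 1 / 2 - log ψ / 2 + mixtureTerm v1 p0 ψ := by
  have hquad : bh ^ 2 / (2 * ve ^ 2 * precision ve v1 v0 ψ) ≤ bh ^ 2 / (2 * ve) := by
    refine div_le_div_of_nonneg_left (sq_nonneg bh) (by positivity) ?_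
    calc 2 * ve = 2 * ve ^ 2 * (1 / ve) := by field_simp
      _ ≤ 2 * ve ^ 2 * precision ve v1 v0 ψ := by
        gcongr; exact inv_le_precision hv1 hv0 hψ0.le hψ1
  have hlog : log ψ ≤ log (v0 / ve + ψ + (1 - ψ) * v0 / v1) := by
    refine log_le_log hψ0 ?_
    have : 0 ≤ (1 - ψ) * v0 / v1 := div_nonneg (mul_nonneg (sub_nonneg.2 hψ1) hv0.le) hv1.le
    have : 0 ≤ v0 / ve := by positivity
    linarith
  unfold fstatRemainder
  linarith

lemma tendsto_Fstat_sub_log (hve : 0 < ve) (hv1 : 0 < v1) (hψ0 : 0 < ψ) (hψ1 : ψ ≤ 1) :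
    Tendsto (fun v0 => Fstat ve v1 p0 bh v0 ψ - 1 / 2 * (1 - ψ) * log v0) (𝓝[>] 0)
      (𝓝 (-1 / 2 - log ψ / 2 + mixtureTerm v1 p0 ψ)) := by
  refine (tendsto_fstatRemainder p0 bh hve hψ0).congr' ?_
  filter_upwards [self_mem_nhdsWithin] with v0 hv0
  rw [Fstat_eq_log_add_remainder p0 bh hve hv1 hv0 hψ0.le hψ1]
  ring

lemma tendsto_Fstat_atBot (hve : 0 < ve) (hv1 : 0 < v1) (hψ0 : 0 < ψ) (hψ1 : ψ < 1) :
    Tendsto (fun v0 => Fstat ve v1 p0 bh v0 ψ) (𝓝[>] 0) atBot := by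
  have hlog : Tendsto (fun v0 => 1 / 2 * (1 - ψ) * log v0) (𝓝[>] 0) atBot :=
    tendsto_log_nhdsGT_zero.const_mul_atBot (by linarith)
  exact ((tendsto_Fstat_sub_log p0 bh hve hv1 hψ0 hψ1.le).add_atBot hlog).congr fun v0 => by ring

lemma Fstat_zero_eq (v0 v0' : ℝ) :
    Fstat ve v1 p0 bh v0 0 = Fstat ve v1 p0 bh v0' 0 := by
  simp [Fstat, elbo, mustat, sstat]

lemma eventually_Fstat_lt_Fstat_zero (hve : 0 < ve) (hv1 : 0 < v1) {δ : ℝ} (hδ : 0 < δ) :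
    ∀ᶠ v0 in 𝓝[>] 0, ∀ ψ, δ ≤ ψ → ψ ≤ 1 - δ →
      Fstat ve v1 p0 bh v0 ψ < Fstat ve v1 p0 bh v0 0 := by
  obtain ⟨M, hM⟩ : BddAbove (mixtureTerm v1 p0 '' Set.Icc 0 1) :=
    isCompact_Icc.bddAbove_image (by unfold mixtureTerm; fun_prop)
  set K := bh ^ 2 / (2 * ve) - 1 / 2 - log δ / 2 + M with hK
  have hsmall : ∀ᶠ v0 in 𝓝[>] 0, δ / 2 * log v0 + K < Fstat ve v1 p0 bh 1 0 :=
    (tendsto_atBot_add_const_right _ K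
      (tendsto_log_nhdsGT_zero.const_mul_atBot (half_pos hδ))).eventually (eventually_lt_atBot _)
  filter_upwards [hsmall, Ioo_mem_nhdsGT one_pos] with v0 hv0 ⟨hv0_pos, hv0_lt_one⟩ ψ hδψ hψδ
  have hψ0 : 0 < ψ := hδ.trans_le hδψ
  have hψ1 : ψ ≤ 1 := by linarith
  have hlog_v0 : (1 - ψ) / 2 * log v0 ≤ δ / 2 * log v0 :=
    mul_le_mul_of_nonpos_right (by linarith) (log_neg hv0_pos hv0_lt_one).le
  have hlog_ψ : log δ ≤ log ψ := log_le_log hδ hδψ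
  have hmix : mixtureTerm v1 p0 ψ ≤ M := hM ⟨ψ, ⟨hψ0.le, hψ1⟩, rfl⟩
  have hrem := fstatRemainder_le p0 bh hve hv1 hv0_pos hψ0 hψ1
  rw [Fstat_eq_log_add_remainder p0 bh hve hv1 hv0_pos hψ0.le hψ1, Fstat_zero_eq p0 bh v0 1]
  linarith

end

theorem naive_meanfield_elbo_degenerates_general
    (ve v1 p0 bh : ℝ) (hve : 0 < ve) (hv1 : 0 < v1) :
    (∀ ψ : ℝ, 0 < ψ → ψ < 1 →
      ((fun v0 => Fstat ve v1 p0 bh v0 ψ - (1 / 2) * (1 - ψ) * Real.log v0)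
          =O[nhdsWithin 0 (Set.Ioi 0)] (fun _ => (1 : ℝ))) ∧
        Tendsto (fun v0 => Fstat ve v1 p0 bh v0 ψ) (nhdsWithin 0 (Set.Ioi 0)) atBot) ∧
    (∃ C : ℝ, ∀ᶠ v0 in nhdsWithin (0 : ℝ) (Set.Ioi 0),
      |Fstat ve v1 p0 bh v0 0| ≤ C ∧ |Fstat ve v1 p0 bh v0 1| ≤ C) ∧
    (∀ δ : ℝ, 0 < δ →
      ∀ᶠ v0 in nhdsWithin (0 : ℝ) (Set.Ioi 0),
        ∀ ψs ∈ Set.Icc (0 : ℝ) 1,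
          IsMaxOn (fun ψ => Fstat ve v1 p0 bh v0 ψ) (Set.Icc 0 1) ψs →
            ψs ≤ δ ∨ 1 - δ ≤ ψs) := by
  refine ⟨fun ψ hψ0 hψ1 => ⟨(tendsto_Fstat_sub_log p0 bh hve hv1 hψ0 hψ1.le).isBigO_one ℝ,
    tendsto_Fstat_atBot p0 bh hve hv1 hψ0 hψ1⟩, ?_, ?_⟩
  · obtain ⟨L, hone⟩ : ∃ L, Tendsto (fun v0 => Fstat ve v1 p0 bh v0 1) (𝓝[>] 0) (𝓝 L) :=
      ⟨_, by simpa using tendsto_Fstat_sub_log p0 bh hve hv1 one_pos le_rfl⟩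
    refine ⟨max |Fstat ve v1 p0 bh 1 0| (|L| + 1), ?_⟩
    filter_upwards [hone.abs.eventually (gt_mem_nhds (lt_add_one |L|))] with v0 hv0
    exact ⟨(Fstat_zero_eq p0 bh v0 1).symm ▸ le_max_left _ _,
      hv0.le.trans (le_max_right _ _)⟩
  · intro δ hδ
    filter_upwards [eventually_Fstat_lt_Fstat_zero p0 bh hve hv1 hδ] with v0 hv0 ψs _ hmax
    by_contra! hmid
    exact (hv0 ψs hmid.1.le hmid.2.le).not_ge (hmax ⟨le_rfl, zero_le_one⟩)

/-- As `σ₀² ↓ 0`: for fixed `ψ₀ ∈ (0,1)` the stationary ELBo is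
`(1/2)(1−ψ₀)log σ₀² + O(1)` and tends to `−∞`; at `ψ₀ = 0` and `ψ₀ = 1` it remains
bounded; hence eventually any maximizer of the ELBo over `ψ₀ ∈ [0,1]` lies within any
prescribed `δ`-neighborhood of `{0, 1}`. -/
theorem naive_meanfield_elbo_degenerates
    (ve v1 p0 bh : ℝ) (hve : 0 < ve) (hv1 : 0 < v1) (hp0 : 0 < p0) (hp0' : p0 < 1) :
    (∀ ψ : ℝ, 0 < ψ → ψ < 1 →
      ((fun v0 => Fstat ve v1 p0 bh v0 ψ - (1 / 2) * (1 - ψ) * Real.log v0)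
          =O[nhdsWithin 0 (Set.Ioi 0)] (fun _ => (1 : ℝ))) ∧
        Tendsto (fun v0 => Fstat ve v1 p0 bh v0 ψ) (nhdsWithin 0 (Set.Ioi 0)) atBot) ∧
    (∃ C : ℝ, ∀ᶠ v0 in nhdsWithin (0 : ℝ) (Set.Ioi 0),
      |Fstat ve v1 p0 bh v0 0| ≤ C ∧ |Fstat ve v1 p0 bh v0 1| ≤ C) ∧
    (∀ δ : ℝ, 0 < δ →
      ∀ᶠ v0 in nhdsWithin (0 : ℝ) (Set.Ioi 0),
        ∀ ψs ∈ Set.Icc (0 : ℝ) 1,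
          IsMaxOn (fun ψ => Fstat ve v1 p0 bh v0 ψ) (Set.Icc 0 1) ψs →
            ψs ≤ δ ∨ 1 - δ ≤ ψs) :=
  naive_meanfield_elbo_degenerates_general ve v1 p0 bh hve hv1
end

section
/- Let the prior on a vector x be a mixture, over pairwise disjoint supersets, of a nondegenerate multivariate Gaussian N(m, Σ) on ℝᵈ (restricted off a fixed affine subspace V) and a degenerate Gaussian supported on the affine subspace V = {x : Mx = v}. Then for a Gaussian likelihood y | x ~ N(Ax, Γ) with Γ positive definite, the posterior is again a mixture of a nondegenerate Gaussian (restricted off V) and a degenerate Gaussian supported on V; i.e., the mixture family is conjugate to the Gaussian likelihood. -/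
open scoped RealInnerProductSpace

/-- (Conjugacy of Gaussian/degenerate-Gaussian mixtures.) Let the prior
on `x` be a mixture (over the disjoint supports `V = {x : Mx = v}` and its complement) of
a degenerate Gaussian supported on the affine subspace `V` — with density on `V`, w.r.t. a
reference measure on `V`, of Gaussian exponential-quadratic form
`exp(−½⟪x,Q₁x⟫+⟪b₁,x⟫+c₁)` — and a nondegenerate Gaussian (precision `Q₂` positive
definite) restricted off `V`. Then multiplying by the Gaussian likelihood
`y|x ~ N(Ax, Γ)` (with precision `G = Γ⁻¹` positive definite) yields an unnormalized
posterior of exactly the same mixture form: a degenerate Gaussian on `V` and a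
nondegenerate Gaussian off `V`, with updated precisions `Qᵢ + AᵀGA`, the nondegenerate
one still positive definite; i.e. the mixture family is conjugate to the Gaussian
likelihood. -/
theorem gaussian_degenerate_mixture_conjugate
    {E F G' : Type*}
    [NormedAddCommGroup E] [InnerProductSpace ℝ E] [FiniteDimensional ℝ E]
    [NormedAddCommGroup F] [InnerProductSpace ℝ F] [FiniteDimensional ℝ F]
    [AddCommGroup G'] [Module ℝ G'] [DecidableEq G']
    (M : E →ₗ[ℝ] G') (v : G') (A : E →ₗ[ℝ] F)
    (Gm : F →ₗ[ℝ] F) (hGsym : ∀ z w, ⟪Gm z, w⟫ = ⟪z, Gm w⟫)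
    (hGpos : ∀ z : F, z ≠ 0 → 0 < ⟪z, Gm z⟫)
    (Q₁ Q₂ : E →ₗ[ℝ] E) (hQ₂pos : ∀ z : E, z ≠ 0 → 0 < ⟪z, Q₂ z⟫)
    (b₁ b₂ : E) (c₁ c₂ : ℝ) (w : ℝ) (hw : 0 < w) (hw' : w < 1)
    (y : F) (p lik : E → ℝ)
    (hp : ∀ x, p x =
      if M x = v then w * Real.exp (-(1 / 2) * ⟪x, Q₁ x⟫ + ⟪b₁, x⟫ + c₁)
      else (1 - w) * Real.exp (-(1 / 2) * ⟪x, Q₂ x⟫ + ⟪b₂, x⟫ + c₂))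
    (hlik : ∀ x, lik x = Real.exp (-(1 / 2) * ⟪A x - y, Gm (A x - y)⟫)) :
    ∃ (b₁' b₂' : E) (c₁' c₂' : ℝ),
      (∀ x, p x * lik x =
        if M x = v then
          w * Real.exp
            (-(1 / 2) * ⟪x, (Q₁ + (LinearMap.adjoint A) ∘ₗ Gm ∘ₗ A) x⟫ + ⟪b₁', x⟫ + c₁')
        else
          (1 - w) * Real.exp
            (-(1 / 2) * ⟪x, (Q₂ + (LinearMap.adjoint A) ∘ₗ Gm ∘ₗ A) x⟫ + ⟪b₂', x⟫ + c₂')) ∧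
      (∀ z : E, z ≠ 0 → 0 < ⟪z, (Q₂ + (LinearMap.adjoint A) ∘ₗ Gm ∘ₗ A) z⟫) := by
  refine ⟨b₁ + (LinearMap.adjoint A) (Gm y), b₂ + (LinearMap.adjoint A) (Gm y),
    c₁ - (1/2) * ⟪y, Gm y⟫, c₂ - (1/2) * ⟪y, Gm y⟫, ?_, ?_⟩
  · intro x
    have hquad : ⟪A x - y, Gm (A x - y)⟫ =
        ⟪x, ((LinearMap.adjoint A) ∘ₗ Gm ∘ₗ A) x⟫
          - 2 * ⟪(LinearMap.adjoint A) (Gm y), x⟫ + ⟪y, Gm y⟫ := by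
      have h1 : ⟪x, ((LinearMap.adjoint A) ∘ₗ Gm ∘ₗ A) x⟫ = ⟪A x, Gm (A x)⟫ := by
        simp [LinearMap.comp_apply, LinearMap.adjoint_inner_right]
      have h2 : ⟪(LinearMap.adjoint A) (Gm y), x⟫ = ⟪Gm y, A x⟫ := by
        simp [LinearMap.adjoint_inner_left]
      have h3 : ⟪A x, Gm y⟫ = ⟪Gm y, A x⟫ := real_inner_comm _ _
      have h4 : ⟪y, Gm (A x)⟫ = ⟪Gm y, A x⟫ := (hGsym y (A x)).symm
      rw [h1, h2]
      simp only [map_sub, inner_sub_left, inner_sub_right]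
      rw [h3, h4]; ring
    have key : ∀ (Q : E →ₗ[ℝ] E) (b : E) (c : ℝ),
        (-(1 / 2) * ⟪x, Q x⟫ + ⟪b, x⟫ + c) + (-(1 / 2) * ⟪A x - y, Gm (A x - y)⟫) =
        -(1 / 2) * ⟪x, (Q + (LinearMap.adjoint A) ∘ₗ Gm ∘ₗ A) x⟫
          + ⟪b + (LinearMap.adjoint A) (Gm y), x⟫ + (c - (1/2) * ⟪y, Gm y⟫) := by
      intro Q b c
      rw [hquad]
      simp only [LinearMap.add_apply, inner_add_left, inner_add_right]
      ring
    rw [hp, hlik]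
    by_cases hMx : M x = v
    · simp only [hMx, if_true, mul_assoc, ← Real.exp_add, key]
    · simp only [hMx, if_false, mul_assoc, ← Real.exp_add, key]
  · intro z hz
    have h1 : ⟪z, (Q₂ + (LinearMap.adjoint A) ∘ₗ Gm ∘ₗ A) z⟫
        = ⟪z, Q₂ z⟫ + ⟪A z, Gm (A z)⟫ := by
      simp [LinearMap.add_apply, inner_add_right, LinearMap.comp_apply,
        LinearMap.adjoint_inner_right]
    rw [h1]
    have h2 : 0 ≤ ⟪A z, Gm (A z)⟫ := by
      by_cases hAz : A z = 0
      · simp [hAz]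
      · exact le_of_lt (hGpos _ hAz)
    linarith [hQ₂pos z hz]
end
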